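/- arXiv:2312.00089 — 2 statements merged into one kernel-verified Lean document; each statement's English description precedes it below -/
import Mathlib

section
/- Let n > x ≥ 2 and let {S_1, S_2, ..., S_x} be a constant sum partition of I_n with magic constant M, where |S_i| = n_i with 1 ≤ n_1 ≤ n_2 ≤ ... ≤ n_x < n, and set N_i = n_1 + n_2 + ... + n_i. Then for every i with 1 ≤ i ≤ x, one has i·M ≤ ∑_{j=1}^{N_i} (n − j + 1) = T_n − T_{n−N_i}. -/
/-!
The union `T` of the first `i + 1` parts has `N_i` elements and sum `(i + 1) M`. A set of `N`
numbers from `{0, …, n}` sums to at most the sum `n + (n - 1) + ⋯ + (n - N + 1)` of the `N`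
largest ones (peel off the maximum and induct), and that sum is `T_n - T_{n - N}`.
-/

open Finset

theorem Finset.sum_le_sum_range_sub {n : ℕ} {T : Finset ℕ} (hT : T ⊆ Iic n) :
    ∑ a ∈ T, a ≤ ∑ j ∈ range #T, (n - j) := by
  induction T using Finset.induction_on_max generalizing n with
  | empty => simp
  | insert a s hlt ih =>
    have has : a ∉ s := fun h => lt_irrefl a (hlt a h)
    have ha : a ≤ n := mem_Iic.mp (hT (mem_insert_self a s))
    have hs : s ⊆ Iic (a - 1) := fun x hx => mem_Iic.mpr (by have := hlt x hx; omega)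
    rw [sum_insert has, card_insert_of_notMem has, sum_range_succ', Nat.sub_zero, add_comm _ n]
    calc a + ∑ x ∈ s, x ≤ n + ∑ j ∈ range #s, (a - 1 - j) := add_le_add ha (ih hs)
      _ ≤ n + ∑ j ∈ range #s, (n - (j + 1)) :=
        add_le_add le_rfl (sum_le_sum fun j _ => by omega)

-- Doubled and with the subtraction moved across, so the inductive step is a ring identity.
theorem Finset.sum_range_sub_mul_two_add {N n : ℕ} (h : N ≤ n) :
    (∑ j ∈ range N, (n - j)) * 2 + (n - N) * (n - N + 1) = n * (n + 1) := by
  induction N with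
  | zero => simp
  | succ N ih =>
    obtain ⟨m, hm⟩ : ∃ m, n - N = m + 1 := ⟨n - N - 1, by omega⟩
    rw [sum_range_succ, ← ih (by omega), hm, show n - (N + 1) = m by omega]
    ring

theorem Finset.sum_range_sub_eq {N n : ℕ} (h : N ≤ n) :
    ∑ j ∈ range N, (n - j) = n * (n + 1) / 2 - (n - N) * (n - N + 1) / 2 := by
  have := sum_range_sub_mul_two_add h
  have := Nat.even_mul_succ_self (n - N)
  generalize n * (n + 1) = b, (n - N) * (n - N + 1) = a at *
  obtain ⟨c, rfl⟩ := this
  omega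

theorem Finset.sum_Icc_sub_add_one_eq_sum_range {N n : ℕ} (h : N ≤ n) :
    ∑ j ∈ Icc 1 N, (n - j + 1) = ∑ j ∈ range N, (n - j) := by
  rw [← Finset.Ico_add_one_right_eq_Icc, sum_Ico_eq_sum_range, Nat.add_sub_cancel]
  exact sum_congr rfl fun j hj => by have := mem_range.mp hj; omega

theorem stmt_1_general (n x M : ℕ)
    (nn : Fin x → ℕ)
    (S : Fin x → Finset ℕ)
    (hcard : ∀ i, (S i).card = nn i)
    (hdisj : ∀ i j, i ≠ j → Disjoint (S i) (S j))
    (hcover : Finset.univ.biUnion S = Finset.Icc 1 n)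
    (hsum : ∀ i, ∑ a ∈ S i, a = M) :
    ∀ i : Fin x,
      ((i : ℕ) + 1) * M ≤ ∑ j ∈ Finset.Icc 1 (∑ k ∈ Finset.Iic i, nn k), (n - j + 1) ∧
      ∑ j ∈ Finset.Icc 1 (∑ k ∈ Finset.Iic i, nn k), (n - j + 1)
        = n * (n + 1) / 2 -
          (n - ∑ k ∈ Finset.Iic i, nn k) * ((n - ∑ k ∈ Finset.Iic i, nn k) + 1) / 2 := by
  intro i
  set N := ∑ k ∈ Iic i, nn k
  set T := (Iic i).biUnion S
  have hpairwise : (Iic i : Set (Fin x)).PairwiseDisjoint S := fun a _ b _ hab => hdisj a b hab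
  have hT_sub : T ⊆ Icc 1 n := hcover ▸ biUnion_subset_biUnion_of_subset_left S (subset_univ _)
  have hT_card : #T = N := by rw [card_biUnion hpairwise]; exact sum_congr rfl fun k _ => hcard k
  have hT_sum : ∑ a ∈ T, a = (i + 1) * M := by
    rw [sum_biUnion hpairwise, sum_congr rfl fun k _ => hsum k, sum_const, Fin.card_Iic, smul_eq_mul]
  have hN : N ≤ n := by simpa [hT_card] using card_le_card hT_sub
  rw [sum_Icc_sub_add_one_eq_sum_range hN]
  refine ⟨?_, sum_range_sub_eq hN⟩
  rw [← hT_sum, ← hT_card]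
  exact sum_le_sum_range_sub (hT_sub.trans Icc_subset_Iic_self)

/-- If `n > x ≥ 2` and `{S_1, ..., S_x}` is a constant sum partition of
`I_n = {1, ..., n}` with magic constant `M`, where `|S_i| = n_i`,
`1 ≤ n_1 ≤ n_2 ≤ ... ≤ n_x < n` and `N_i = n_1 + ... + n_i`, then for every `i`
(indexed here by `Fin x`, so `i : Fin x` corresponds to the `(i+1)`-st part),
`i·M ≤ ∑_{j=1}^{N_i} (n - j + 1) = T_n - T_{n - N_i}`. -/
theorem stmt_1 (n x M : ℕ) (hx : 2 ≤ x) (hn : x < n)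
    (nn : Fin x → ℕ) (hpos : ∀ i, 1 ≤ nn i) (hmono : Monotone nn)
    (hlt : ∀ i, nn i < n)
    (S : Fin x → Finset ℕ)
    (hcard : ∀ i, (S i).card = nn i)
    (hdisj : ∀ i j, i ≠ j → Disjoint (S i) (S j))
    (hcover : Finset.univ.biUnion S = Finset.Icc 1 n)
    (hsum : ∀ i, ∑ a ∈ S i, a = M) :
    ∀ i : Fin x,
      ((i : ℕ) + 1) * M ≤ ∑ j ∈ Finset.Icc 1 (∑ k ∈ Finset.Iic i, nn k), (n - j + 1) ∧
      ∑ j ∈ Finset.Icc 1 (∑ k ∈ Finset.Iic i, nn k), (n - j + 1)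
        = n * (n + 1) / 2 -
          (n - ∑ k ∈ Finset.Iic i, nn k) * ((n - ∑ k ∈ Finset.Iic i, nn k) + 1) / 2 :=
  stmt_1_general n x M nn S hcard hdisj hcover hsum
end

section
/- Let n > x ≥ p ≥ 2 and let {S_1, S_2, ..., S_x} be a partition of I_n with |S_i| = n_i, where 1 ≤ n_1 = n_2 = ... = n_p ≤ n_{p+1} ≤ ... ≤ n_x, and set Q_p = ∑_{j=1}^{p·n_1} (n − j + 1) and M = T_n/x. If M > ⌊Q_p/p⌋, then {S_1, S_2, ..., S_x} cannot be a constant sum partition of I_n. -/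
/-!
Only the `p` smallest blocks matter. Together they contain `p * n₁` distinct elements of `I_n`,
so their total `p * M` is at most the sum `Q_p` of the `p * n₁` largest elements of `I_n`.
Hence `M ≤ ⌊Q_p / p⌋`, while summing over all `x` blocks gives `x * M = T_n`.
-/

open Finset Function

theorem Finset.sum_Icc_id_mul_two (n : ℕ) : (∑ a ∈ Icc 1 n, a) * 2 = n * (n + 1) := by
  rw [← Ico_add_one_right_eq_Icc, sum_Ico_eq_sum_range, add_tsub_cancel_right]
  have h := sum_range_succ' (fun i => i) n
  simp only [add_zero] at h
  rw [sum_congr rfl fun i _ => add_comm 1 i, ← h, sum_range_id_mul_two, add_tsub_cancel_right,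
    mul_comm]

theorem Finset.sum_range_sub_le_sum_Icc_sub_add_one (n k : ℕ) :
    ∑ j ∈ range k, (n - j) ≤ ∑ j ∈ Icc 1 k, (n - j + 1) := by
  rw [← Ico_add_one_right_eq_Icc, sum_Ico_eq_sum_range, add_tsub_cancel_right]
  exact sum_le_sum fun j _ => by omega

/-- `∑ j ∈ range #T, (n - j)` is the sum of the `#T` largest naturals `≤ n`. -/
theorem Finset.sum_le_sum_range_sub_of_forall_le (n : ℕ) (T : Finset ℕ) (hT : ∀ a ∈ T, a ≤ n) :
    ∑ a ∈ T, a ≤ ∑ j ∈ range #T, (n - j) := by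
  induction n generalizing T with
  | zero => simp [sum_eq_zero fun a ha => Nat.le_zero.mp (hT a ha)]
  | succ n ih =>
    by_cases htop : n + 1 ∈ T
    · have hrest : ∀ a ∈ T.erase (n + 1), a ≤ n := fun a ha => by
        have := hT a (mem_of_mem_erase ha)
        have := ne_of_mem_erase ha
        omega
      calc ∑ a ∈ T, a = (n + 1) + ∑ a ∈ T.erase (n + 1), a := (add_sum_erase T id htop).symm
        _ ≤ (n + 1) + ∑ j ∈ range #(T.erase (n + 1)), (n - j) := by gcongr; exact ih _ hrest
        _ = ∑ j ∈ range #T, (n + 1 - j) := by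
          rw [← card_erase_add_one htop, sum_range_succ']
          simp [add_comm]
    · calc ∑ a ∈ T, a ≤ ∑ j ∈ range #T, (n - j) :=
            ih T fun a ha => Nat.le_of_lt_succ <| (hT a ha).lt_of_ne fun h => htop (h ▸ ha)
        _ ≤ ∑ j ∈ range #T, (n + 1 - j) := sum_le_sum fun j _ => by omega

theorem Finset.card_mul_le_sum_range_sub_of_pairwise_disjoint {ι : Type*} [Fintype ι]
    (n c M : ℕ) (S : ι → Finset ℕ) (hdisj : Pairwise (Disjoint on S))
    (hle : ∀ i, ∀ a ∈ S i, a ≤ n) (hcard : ∀ i, #(S i) = c) (hsum : ∀ i, ∑ a ∈ S i, a = M) :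
    Fintype.card ι * M ≤ ∑ j ∈ range (Fintype.card ι * c), (n - j) := by
  have hdisj' := hdisj.set_pairwise (univ : Finset ι)
  have hsumU : ∑ a ∈ univ.biUnion S, a = Fintype.card ι * M := by
    simp [sum_biUnion hdisj', hsum]
  have hcardU : #(univ.biUnion S) = Fintype.card ι * c := by
    simp [card_biUnion hdisj', hcard]
  rw [← hsumU, ← hcardU]
  exact sum_le_sum_range_sub_of_forall_le n _ fun a ha =>
    let ⟨i, _, hai⟩ := mem_biUnion.mp ha
    hle i a hai

/-- Let `n > x ≥ p ≥ 2` and `{S_1, ..., S_x}` be a partition of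
`I_n = {1, ..., n}` with `|S_i| = n_i`, `1 ≤ n_1 = ... = n_p ≤ n_{p+1} ≤ ... ≤ n_x`,
and set `Q_p = ∑_{j=1}^{p·n_1} (n - j + 1)` and `M = T_n / x` (as a rational number).
If `M > ⌊Q_p / p⌋` then `{S_1, ..., S_x}` is not a constant sum partition of `I_n`.
(`⌊Q_p / p⌋` is natural-number division of naturals, i.e. the floor.) -/
theorem stmt_5 (n x p : ℕ) (hp : 2 ≤ p) (hpx : p ≤ x)
    (nn : Fin x → ℕ)
    (heq : ∀ i : Fin x, (i : ℕ) < p → nn i = nn ⟨0, by omega⟩)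
    (S : Fin x → Finset ℕ)
    (hcard : ∀ i, (S i).card = nn i)
    (hdisj : ∀ i j, i ≠ j → Disjoint (S i) (S j))
    (hcover : Finset.univ.biUnion S = Finset.Icc 1 n)
    (hM : ((n * (n + 1) / 2 : ℕ) : ℚ) / (x : ℚ)
            > (((∑ j ∈ Finset.Icc 1 (p * nn ⟨0, by omega⟩), (n - j + 1)) / p : ℕ) : ℚ)) :
    ¬ ∃ M : ℕ, ∀ i, ∑ a ∈ S i, a = M := by
  rintro ⟨M, hMS⟩
  have hdisjS : Pairwise (Disjoint on S) := hdisj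
  have htotal : n * (n + 1) / 2 = x * M := by
    have h := sum_biUnion (hdisjS.set_pairwise (univ : Finset (Fin x))) (f := id)
    simp only [hcover, id, hMS, sum_const, card_univ, Fintype.card_fin, smul_eq_mul] at h
    have := sum_Icc_id_mul_two n
    omega
  have hle : ∀ i, ∀ a ∈ S i, a ≤ n := fun i a ha =>
    (mem_Icc.mp (hcover ▸ mem_biUnion.mpr ⟨i, mem_univ _, ha⟩)).2
  have hsmall : p * M ≤ ∑ j ∈ Icc 1 (p * nn ⟨0, by omega⟩), (n - j + 1) := by
    have h := card_mul_le_sum_range_sub_of_pairwise_disjoint n (nn ⟨0, by omega⟩) M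
      (S ∘ Fin.castLE hpx) (hdisjS.comp_of_injective (Fin.castLE_injective hpx))
      (fun _ => hle _) (fun i => (hcard _).trans (heq _ i.isLt)) (fun i => hMS _)
    rw [Fintype.card_fin] at h
    exact h.trans (sum_range_sub_le_sum_Icc_sub_add_one _ _)
  have hx : (x : ℚ) ≠ 0 := by exact_mod_cast (show x ≠ 0 by omega)
  rw [htotal, Nat.cast_mul, mul_div_cancel_left₀ _ hx, gt_iff_lt, Nat.cast_lt] at hM
  have hM_le : M ≤ (∑ j ∈ Icc 1 (p * nn ⟨0, by omega⟩), (n - j + 1)) / p :=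
    (Nat.le_div_iff_mul_le (by omega)).mpr (by rwa [mul_comm] at hsmall)
  exact hM_le.not_gt hM
end
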